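/- arXiv:2605.17446 — 9 statements merged into one kernel-verified Lean document; each statement's English description precedes it below -/
import Mathlib

section
/- Let 0 = K_0 < K_1 < ... < K_N and A_0 = 0, A_1, ..., A_N be real numbers. Define L_0 as the set of lines f_{i,j} (through (K_i,A_i) and (K_j,A_j), i < j) satisfying f_{i,j}(0) < 0 and f_{i,j}(K_n) ≤ A_n for all n = 1,...,N. If f_{i,j} ∈ L_0 with 0 < i < j < N, then there exists an integer k with j < k ≤ N such that f_{j,k} ∈ L_0. -/
/-- The affine line through `(K i, A i)` and `(K j, A j)`. -/
noncomputable def line (K A : ℕ → ℝ) (i j : ℕ) (x : ℝ) : ℝ :=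
  (A j - A i) / (K j - K i) * (x - K i) + A i

/-- Membership in `L₀`: the line `f_{i,j}` has negative intercept and lies weakly
below all ask points `(K n, A n)`, `n = 1, …, N`. -/
def memL0 (N : ℕ) (K A : ℕ → ℝ) (i j : ℕ) : Prop :=
  i < j ∧ j ≤ N ∧ line K A i j 0 < 0 ∧
    ∀ n : ℕ, 1 ≤ n → n ≤ N → line K A i j (K n) ≤ A n

/-- Lemma 3.2: if `f_{i,j} ∈ L₀` with `0 < i < j < N`, then there exists
`k` with `j < k ≤ N` such that `f_{j,k} ∈ L₀`. -/
theorem stmt_1 (N : ℕ) (K A : ℕ → ℝ)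
    (hK0 : K 0 = 0) (hA0 : A 0 = 0)
    (hKmono : ∀ m n : ℕ, m < n → n ≤ N → K m < K n)
    (i j : ℕ) (hi : 0 < i) (hij : i < j) (hjN : j < N)
    (hmem : memL0 N K A i j) :
    ∃ k : ℕ, j < k ∧ k ≤ N ∧ memL0 N K A j k := by
  obtain ⟨hij', hjN', hint, hbelow⟩ := hmem
  have hKj : 0 < K j := hK0 ▸ hKmono 0 j (hi.trans hij) hjN.le
  have hKij : K i < K j := hKmono i j hij hjN.le
  set t := (A j - A i) / (K j - K i) with ht
  have htij : t * (K j - K i) = A j - A i := div_mul_cancel₀ _ (by linarith)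
  have hline : ∀ x : ℝ, line K A i j x = t * (x - K j) + A j := by
    intro x
    show t * (x - K i) + A i = t * (x - K j) + A j
    linear_combination htij
  -- slope of f_{i,j} is ≤ slope of f_{j,m} for every m ∈ (j, N]
  have hslope : ∀ m : ℕ, j < m → m ≤ N → t ≤ (A m - A j) / (K m - K j) := by
    intro m hjm hmN
    have hKjm : K j < K m := hKmono j m hjm hmN
    have h1 : line K A i j (K m) ≤ A m :=
      hbelow m (by omega) hmN
    rw [hline] at h1
    rw [le_div_iff₀ (by linarith)]
    linarith
  obtain ⟨k, hk, hkmin⟩ := Finset.exists_min_image (Finset.Icc (j + 1) N)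
    (fun m => (A m - A j) / (K m - K j)) ⟨N, by simp [Nat.succ_le_iff, hjN]⟩
  simp only [Finset.mem_Icc] at hk
  have hjk : j < k := hk.1
  have hkN : k ≤ N := hk.2
  have hKjk : K j < K k := hKmono j k hjk hkN
  set s := (A k - A j) / (K k - K j) with hs
  have hsjk : s * (K k - K j) = A k - A j := div_mul_cancel₀ _ (by linarith)
  have hlineJK : ∀ x : ℝ, line K A j k x = s * (x - K j) + A j := fun x => rfl
  have hts : t ≤ s := hslope k hjk hkN
  refine ⟨k, hjk, hkN, hjk, hkN, ?_, ?_⟩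
  · -- negative intercept
    have h0 := hint
    rw [hline] at h0
    rw [hlineJK]
    nlinarith [mul_le_mul_of_nonneg_right hts hKj.le]
  · intro n hn1 hnN
    rw [hlineJK]
    rcases lt_trichotomy n j with hnj | hnj | hnj
    · -- n < j
      have hKnj : K n < K j := hKmono n j hnj hjN.le
      have h1 : line K A i j (K n) ≤ A n := hbelow n hn1 hnN
      rw [hline] at h1
      nlinarith [mul_le_mul_of_nonpos_right hts (by linarith : K n - K j ≤ 0)]
    · subst hnj; simp
    · -- j < n
      have hKjn : K j < K n := hKmono j n hnj hnN
      have h1 : s ≤ (A n - A j) / (K n - K j) :=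
        hkmin n (by simp [Finset.mem_Icc]; omega)
      rw [le_div_iff₀ (by linarith)] at h1
      linarith
end

section
/- Consider strikes 0 < K_1 < ... < K_N with ask prices A_n and bid prices B_n (B_n ≤ A_n), a bond price D > 0, and suppose the corresponding put-option market is arbitrage-free. Then for any integers 0 ≤ i < j < k ≤ N (with convention K_0 = A_0 = B_0 = 0), the line f_{i,k} through (K_i, A_i) and (K_k, A_k) satisfies f_{i,k}(K_j) > B_j. -/
/-- Initial cost of a static portfolio consisting of `β` zero-coupon bonds (price `D`)
and `π n` put options at strike `K n` (asks used for longs, bids for shorts). -/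
noncomputable def putCost (N : ℕ) (A B : ℕ → ℝ) (D β : ℝ) (π : ℕ → ℝ) : ℝ :=
  (max β 0 * D - max (-β) 0 * D) +
    ∑ n ∈ Finset.Icc 1 N, (max (π n) 0 * A n - max (-π n) 0 * B n)

/-- Terminal payoff of the portfolio in state `ω` (terminal asset price). -/
noncomputable def putValue (N : ℕ) (K : ℕ → ℝ) (β : ℝ) (π : ℕ → ℝ) (ω : ℝ) : ℝ :=
  β + ∑ n ∈ Finset.Icc 1 N, π n * max (K n - ω) 0

/-- The put-option market `(K n, A n, B n)_{1 ≤ n ≤ N}` with bond price `D` is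
arbitrage-free: no static portfolio has nonnegative net terminal value in every
state and positive net terminal value in some state. -/
def PutArbitrageFree (N : ℕ) (K A B : ℕ → ℝ) (D : ℝ) : Prop :=
  ¬ ∃ (β : ℝ) (π : ℕ → ℝ),
      (∀ ω : ℝ, 0 ≤ ω → 0 ≤ putValue N K β π ω - putCost N A B D β π / D) ∧
      (∃ ω : ℝ, 0 ≤ ω ∧ 0 < putValue N K β π ω - putCost N A B D β π / D)

/-- Lemma 3.5 (butterfly): in an arbitrage-free put market, for `0 ≤ i < j < k ≤ N`
(with convention `K 0 = A 0 = B 0 = 0`), the line through `(K i, A i)` and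
`(K k, A k)` lies strictly above the bid at `K j`. -/
theorem stmt_2 (N : ℕ) (K A B : ℕ → ℝ) (D : ℝ) (hD : 0 < D)
    (hK0 : K 0 = 0) (hA0 : A 0 = 0) (hB0 : B 0 = 0)
    (hKpos : 0 < K 1)
    (hKmono : ∀ m n : ℕ, m < n → n ≤ N → K m < K n)
    (hBA : ∀ n : ℕ, 1 ≤ n → n ≤ N → B n ≤ A n)
    (hAF : PutArbitrageFree N K A B D)
    (i j k : ℕ) (hij : i < j) (hjk : j < k) (hkN : k ≤ N) :
    B j < line K A i k (K j) := by
  by_contra hcon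
  push_neg at hcon
  apply hAF
  have hjN : j ≤ N := le_of_lt (lt_of_lt_of_le hjk hkN)
  have hiN : i ≤ N := le_of_lt (lt_of_lt_of_le hij hjN)
  have hab : K i < K j := hKmono i j hij hjN
  have hbc : K j < K k := hKmono j k hjk hkN
  have ha0 : 0 ≤ K i := by
    rcases Nat.eq_zero_or_pos i with h | h
    · rw [h, hK0]
    · exact le_of_lt (hK0 ▸ hKmono 0 i h hiN)
  have hca : (0:ℝ) < K k - K i := by linarith
  set lam : ℝ := (K k - K j)/(K k - K i) with hlamdef
  have hlam : 0 < lam := div_pos (by linarith) hca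
  have h1lam : 0 < 1 - lam := by
    have : lam < 1 := (div_lt_one hca).2 (by linarith)
    linarith
  have hbid : lam * K i + (1 - lam) * K k = K j := by
    rw [hlamdef]; field_simp; ring
  have hij' : i ≠ j := Nat.ne_of_lt hij
  have hik : i ≠ k := Nat.ne_of_lt (lt_trans hij hjk)
  have hjk' : j ≠ k := Nat.ne_of_lt hjk
  set π : ℕ → ℝ := fun n => if n = i then lam else if n = j then -1 else
      if n = k then 1 - lam else 0 with hπ
  have hπi : π i = lam := by simp [hπ]
  have hπj : π j = -1 := by simp [hπ, Ne.symm hij']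
  have hπk : π k = 1 - lam := by simp [hπ, Ne.symm hik, Ne.symm hjk']
  have key : ∀ g : ℕ → ℝ, g 0 = 0 → (∀ n, n ≠ i → n ≠ j → n ≠ k → g n = 0) →
      ∑ n ∈ Finset.Icc 1 N, g n = g i + g j + g k := by
    intro g hg0 hg
    have h1 : Finset.Icc 0 N = insert 0 (Finset.Icc 1 N) := by
      ext n; simp [Finset.mem_Icc]; omega
    have h2 : ∑ n ∈ Finset.Icc 0 N, g n = g 0 + ∑ n ∈ Finset.Icc 1 N, g n := by
      rw [h1, Finset.sum_insert (by simp)]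
    have hsub : ({i, j, k} : Finset ℕ) ⊆ Finset.Icc 0 N := by
      intro n hn
      simp only [Finset.mem_insert, Finset.mem_singleton] at hn
      rcases hn with rfl | rfl | rfl <;> simp [Finset.mem_Icc] <;> omega
    have h3 : ∑ n ∈ ({i, j, k} : Finset ℕ), g n = ∑ n ∈ Finset.Icc 0 N, g n := by
      apply Finset.sum_subset hsub
      intro n _ hn
      simp only [Finset.mem_insert, Finset.mem_singleton, not_or] at hn
      exact hg n hn.1 hn.2.1 hn.2.2
    have h4 : ∑ n ∈ ({i, j, k} : Finset ℕ), g n = g i + g j + g k := by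
      rw [Finset.sum_insert (by simp [hij', hik]), Finset.sum_pair hjk']
      ring
    rw [hg0] at h2
    linarith
  have hmaxlam : max lam 0 = lam := max_eq_left hlam.le
  have hmaxnlam : max (-lam) 0 = 0 := max_eq_right (by linarith)
  have hmax1lam : max (1 - lam) 0 = 1 - lam := max_eq_left h1lam.le
  have hmaxn1lam : max (-(1 - lam)) 0 = 0 := max_eq_right (by linarith)
  have hcost : putCost N A B D 0 π = lam * A i + (- B j) + (1 - lam) * A k := by
    unfold putCost
    rw [key (fun n => max (π n) 0 * A n - max (-π n) 0 * B n)
        (by simp [hA0, hB0]) ?_]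
    · simp only [hπi, hπj, hπk, hmaxlam, hmaxnlam, hmax1lam, hmaxn1lam]
      norm_num
    · intro n h1 h2 h3
      have : π n = 0 := by simp [hπ, h1, h2, h3]
      simp [this]
  have hline : lam * A i + (1 - lam) * A k = line K A i k (K j) := by
    unfold line
    rw [hlamdef]
    field_simp
    ring
  have hC : putCost N A B D 0 π ≤ 0 := by
    rw [hcost]; linarith
  have hCD : putCost N A B D 0 π / D ≤ 0 :=
    div_nonpos_of_nonpos_of_nonneg hC hD.le
  have hval : ∀ ω : ℝ, 0 ≤ ω → putValue N K 0 π ω =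
      lam * max (K i - ω) 0 + (-1) * max (K j - ω) 0 + (1 - lam) * max (K k - ω) 0 := by
    intro ω hω
    unfold putValue
    rw [key (fun n => π n * max (K n - ω) 0) ?_ ?_]
    · rw [hπi, hπj, hπk]; ring
    · have : max (K 0 - ω) 0 = 0 := max_eq_right (by rw [hK0]; linarith)
      simp [this]
    · intro n h1 h2 h3
      have : π n = 0 := by simp [hπ, h1, h2, h3]
      simp [this]
  refine ⟨0, π, ?_, ⟨K j, by linarith, ?_⟩⟩
  · intro ω hω
    rw [hval ω hω]
    have m1 : K i - ω ≤ max (K i - ω) 0 := le_max_left _ _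
    have m1' : 0 ≤ max (K i - ω) 0 := le_max_right _ _
    have m3' : 0 ≤ max (K k - ω) 0 := le_max_right _ _
    have p1 : lam * (K i - ω) ≤ lam * max (K i - ω) 0 :=
      mul_le_mul_of_nonneg_left m1 hlam.le
    have p1' : 0 ≤ lam * max (K i - ω) 0 := mul_nonneg hlam.le m1'
    have p3' : 0 ≤ (1 - lam) * max (K k - ω) 0 := mul_nonneg h1lam.le m3'
    rcases le_total (K j - ω) 0 with h | h
    · rw [max_eq_right h]
      linarith
    · rw [max_eq_left h]
      have hcw : max (K k - ω) 0 = K k - ω := max_eq_left (by linarith)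
      rw [hcw]
      nlinarith
  · rw [hval (K j) (by linarith)]
    have h1 : max (K i - K j) 0 = 0 := max_eq_right (by linarith)
    have h2 : max (K j - K j) 0 = 0 := by simp
    have h3 : max (K k - K j) 0 = K k - K j := max_eq_left (by linarith)
    rw [h1, h2, h3]
    nlinarith
end

section
/- Suppose the put-option market with strikes 0 < K_1 < ... < K_N, asks A_n, bids B_n, and bond price D is arbitrage-free. For 0 < i < j ≤ N, define g_{i,j}(K) = ((A_j − B_i)/(K_j − K_i))(K − K_j) + A_j, the line through (K_i, B_i) and (K_j, A_j). Then g_{i,j}(0) < 0. -/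
/-!
Write `g = g_{i,j}`. Since `g(K_j) = A_j` and `g(K_i) = B_i`, the intercept is
`g(0) = (B_i K_j - A_j K_i) / (K_j - K_i)`, so the claim is `B_i K_j < A_j K_i`.
To see this, sell one put at `K_i` and buy `K_i / K_j` puts at `K_j`. The payoff
`(K_i / K_j) (K_j - ω)^+ - (K_i - ω)^+` is nonnegative and equals `K_i (1 - K_i / K_j) > 0`
at `ω = K_i`, so absence of arbitrage forces the cost `(K_i / K_j) A_j - B_i` to be positive.
-/

def ratioPutSpread (i j : ℕ) (c : ℝ) (n : ℕ) : ℝ :=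
  if n = i then -1 else if n = j then c else 0

theorem sum_ratioPutSpread {s : Finset ℕ} {i j : ℕ} (hij : i ≠ j) (hi : i ∈ s)
    (hj : j ∈ s) (c : ℝ) (φ : ℕ → ℝ → ℝ) (hφ : ∀ n, φ n 0 = 0) :
    ∑ n ∈ s, φ n (ratioPutSpread i j c n) = φ i (-1) + φ j c := by
  rw [Finset.sum_eq_add i j hij (fun n _ hn => by simp [ratioPutSpread, hn.1, hn.2, hφ])
    (fun h => absurd hi h) (fun h => absurd hj h)]
  simp [ratioPutSpread, hij.symm]

theorem putValue_ratioPutSpread {N i j : ℕ} (hij : i ≠ j) (hi : i ∈ Finset.Icc 1 N)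
    (hj : j ∈ Finset.Icc 1 N) (K : ℕ → ℝ) (c ω : ℝ) :
    putValue N K 0 (ratioPutSpread i j c) ω = c * max (K j - ω) 0 - max (K i - ω) 0 := by
  rw [putValue, sum_ratioPutSpread hij hi hj c (fun n x => x * max (K n - ω) 0)
    (fun _ => zero_mul _)]
  ring

theorem putCost_ratioPutSpread {N i j : ℕ} (hij : i ≠ j) (hi : i ∈ Finset.Icc 1 N)
    (hj : j ∈ Finset.Icc 1 N) (A B : ℕ → ℝ) (D : ℝ) {c : ℝ} (hc : 0 ≤ c) :
    putCost N A B D 0 (ratioPutSpread i j c) = c * A j - B i := by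
  rw [putCost, sum_ratioPutSpread hij hi hj c (fun n x => max x 0 * A n - max (-x) 0 * B n)
    (fun _ => by simp)]
  simp [hc, sub_eq_neg_add]

theorem ratio_put_payoff_nonneg {a b ω : ℝ} (ha : 0 ≤ a) (hb : 0 < b) (hab : a ≤ b)
    (hω : 0 ≤ ω) :
    0 ≤ a / b * max (b - ω) 0 - max (a - ω) 0 := by
  rcases le_total ω a with hωa | haω
  · rw [max_eq_left (by linarith), max_eq_left (by linarith)]
    have : a / b * (b - ω) - (a - ω) = ω * (b - a) / b := by field_simp; ring
    rw [this]
    exact div_nonneg (mul_nonneg hω (by linarith)) hb.le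
  · rw [max_eq_right (by linarith : a - ω ≤ 0)]
    have : 0 ≤ a / b := div_nonneg ha hb.le
    simpa using mul_nonneg this (le_max_right (b - ω) 0)

theorem ratio_put_payoff_pos {a b : ℝ} (ha : 0 < a) (hab : a < b) :
    0 < a / b * max (b - a) 0 - max (a - a) 0 := by
  rw [max_eq_left (by linarith), sub_self, max_self, sub_zero]
  exact mul_pos (div_pos ha (ha.trans hab)) (by linarith)

theorem PutArbitrageFree.putCost_pos {N : ℕ} {K A B : ℕ → ℝ} {D : ℝ}
    (hAF : PutArbitrageFree N K A B D) (hD : 0 < D) {β : ℝ} {π : ℕ → ℝ}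
    (hnonneg : ∀ ω, 0 ≤ ω → 0 ≤ putValue N K β π ω)
    (hpos : ∃ ω, 0 ≤ ω ∧ 0 < putValue N K β π ω) :
    0 < putCost N A B D β π := by
  by_contra! hcost
  have hfree : putCost N A B D β π / D ≤ 0 := div_nonpos_of_nonpos_of_nonneg hcost hD.le
  obtain ⟨ω₀, hω₀, hpos₀⟩ := hpos
  exact hAF ⟨β, π, fun ω hω => by linarith [hnonneg ω hω], ω₀, hω₀, by linarith⟩

theorem PutArbitrageFree.bid_mul_lt_ask_mul {N : ℕ} {K A B : ℕ → ℝ} {D : ℝ}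
    (hAF : PutArbitrageFree N K A B D) (hD : 0 < D) {i j : ℕ}
    (hi : i ∈ Finset.Icc 1 N) (hj : j ∈ Finset.Icc 1 N) (hKi : 0 < K i) (hKij : K i < K j) :
    B i * K j < A j * K i := by
  have hij : i ≠ j := fun h => hKij.ne (congrArg K h)
  have hKj : 0 < K j := hKi.trans hKij
  have hcost := hAF.putCost_pos hD (π := ratioPutSpread i j (K i / K j))
    (fun ω hω => by
      rw [putValue_ratioPutSpread hij hi hj]
      exact ratio_put_payoff_nonneg hKi.le hKj hKij.le hω)
    ⟨K i, hKi.le, by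
      rw [putValue_ratioPutSpread hij hi hj]
      exact ratio_put_payoff_pos hKi hKij⟩
  rw [putCost_ratioPutSpread hij hi hj A B D (div_nonneg hKi.le hKj.le)] at hcost
  have := mul_lt_mul_of_pos_right hcost hKj
  field_simp at this
  linarith

theorem stmt_4_general (N : ℕ) (K A B : ℕ → ℝ) (D : ℝ) (hD : 0 < D)
    (hKpos : 0 < K 1)
    (hKmono : ∀ m n : ℕ, m < n → n ≤ N → K m < K n)
    (hAF : PutArbitrageFree N K A B D)
    (i j : ℕ) (hi : 0 < i) (hij : i < j) (hjN : j ≤ N) :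
    (A j - B i) / (K j - K i) * (0 - K j) + A j < 0 := by
  have hiN : i ≤ N := hij.le.trans hjN
  have hKij : K i < K j := hKmono i j hij hjN
  have hKi : 0 < K i := by
    rcases (Nat.one_le_of_lt hi).eq_or_lt with rfl | h1
    · exact hKpos
    · exact hKpos.trans (hKmono 1 i h1 hiN)
  have hspread := hAF.bid_mul_lt_ask_mul hD (Finset.mem_Icc.2 ⟨hi, hiN⟩)
    (Finset.mem_Icc.2 ⟨hi.trans hij, hjN⟩) hKi hKij
  have hintercept : (A j - B i) / (K j - K i) * (0 - K j) + A j
      = (B i * K j - A j * K i) / (K j - K i) := by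
    field_simp [(sub_pos.2 hKij).ne']
    ring
  rw [hintercept]
  exact div_neg_of_neg_of_pos (by linarith) (sub_pos.2 hKij)

/-- Lemma 3.7: in an arbitrage-free put market, for `0 < i < j ≤ N` the line
`g_{i,j}` through `(K i, B i)` and `(K j, A j)` has negative intercept. -/
theorem stmt_4 (N : ℕ) (K A B : ℕ → ℝ) (D : ℝ) (hD : 0 < D)
    (hKpos : 0 < K 1)
    (hKmono : ∀ m n : ℕ, m < n → n ≤ N → K m < K n)
    (hBA : ∀ n : ℕ, 1 ≤ n → n ≤ N → B n ≤ A n)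
    (hAF : PutArbitrageFree N K A B D)
    (i j : ℕ) (hi : 0 < i) (hij : i < j) (hjN : j ≤ N) :
    (A j - B i) / (K j - K i) * (0 - K j) + A j < 0 :=
  stmt_4_general N K A B D hD hKpos hKmono hAF i j hi hij hjN
end

section
/- Let 0 = K_0 < K_1 < ... < K_N, asks A_n (A_0 = 0), and D > 0. Define L as the set of lines f_{i,j} (through (K_i,A_i), (K_j,A_j), i < j) with f_{i,j}(0) < 0, f_{i,j}(K_n) ≤ A_n for all n, and slope ≤ D. Define f^D_i(K) = D(K − K_i) + A_i and f^D = min_{1≤i≤N} f^D_i. Let J be the largest index j such that f_{i,j} ∈ L for some i. If L is nonempty, then f^D = f^D_J, i.e., f^D_J(K_n) ≤ A_n for all n = 1, ..., N. -/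
/-- Membership in `L`: `f_{i,j}` has negative intercept, lies weakly below all
ask points, and has slope at most `D`. -/
def memL (N : ℕ) (K A : ℕ → ℝ) (D : ℝ) (i j : ℕ) : Prop :=
  i < j ∧ j ≤ N ∧ line K A i j 0 < 0 ∧
    (∀ n : ℕ, 1 ≤ n → n ≤ N → line K A i j (K n) ≤ A n) ∧
    (A j - A i) / (K j - K i) ≤ D

lemma line_eq (K A : ℕ → ℝ) (i j : ℕ) (h : K j - K i ≠ 0) (x : ℝ) :
    line K A i j x = (A j - A i) / (K j - K i) * (x - K j) + A j := by
  unfold line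
  field_simp
  ring

/-- Lemma 3.3: if `L ≠ ∅` and `J` is the largest right index of a line in `L`,
then `f^D = f^D_J`, i.e. the slope-`D` line through `(K J, A J)` lies weakly
below all ask points. -/
theorem stmt_10 (N : ℕ) (K A : ℕ → ℝ) (D : ℝ) (hD : 0 < D)
    (hK0 : K 0 = 0) (hA0 : A 0 = 0)
    (hKmono : ∀ m n : ℕ, m < n → n ≤ N → K m < K n)
    (J : ℕ) (hJmem : ∃ i : ℕ, i < J ∧ memL N K A D i J)
    (hJmax : ∀ j : ℕ, (∃ i : ℕ, i < j ∧ memL N K A D i j) → j ≤ J) :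
    ∀ n : ℕ, 1 ≤ n → n ≤ N → D * (K n - K J) + A J ≤ A n := by
  obtain ⟨i, hiJ, _, hJN, hneg, hbelow, hslope⟩ := hJmem
  have hKiJ : K i < K J := hKmono i J hiJ hJN
  have hKdiff : K J - K i ≠ 0 := by linarith
  have hKJpos : 0 < K J := by
    have := hKmono 0 J (by omega) hJN
    linarith
  set s := (A J - A i) / (K J - K i) with hs_def
  have hline : ∀ x : ℝ, line K A i J x = s * (x - K J) + A J :=
    line_eq K A i J hKdiff
  rw [hline] at hneg
  have hbelow' : ∀ n : ℕ, 1 ≤ n → n ≤ N → s * (K n - K J) + A J ≤ A n := by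
    intro n h1 h2
    have := hbelow n h1 h2
    rwa [hline] at this
  have part1 : ∀ n : ℕ, 1 ≤ n → n ≤ J → D * (K n - K J) + A J ≤ A n := by
    intro n h1 h2
    rcases eq_or_lt_of_le h2 with rfl | h2'
    · simp
    · have hKn : K n < K J := hKmono n J h2' hJN
      have hf := hbelow' n h1 (le_trans h2 hJN)
      nlinarith
  intro n h1 hN
  by_cases hcase : n ≤ J
  · exact part1 n h1 hcase
  by_contra hviol
  push_neg at hviol
  set V := (Finset.Icc (J+1) N).filter (fun m => A m < D * (K m - K J) + A J) with hV
  have hnV : n ∈ V := by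
    simp only [hV, Finset.mem_filter, Finset.mem_Icc]
    exact ⟨⟨by omega, hN⟩, hviol⟩
  obtain ⟨m, hmV, hmin⟩ :=
    Finset.exists_min_image V (fun m => (A m - A J) / (K m - K J)) ⟨n, hnV⟩
  simp only [hV, Finset.mem_filter, Finset.mem_Icc] at hmV
  obtain ⟨⟨hJm, hmN⟩, hmviol⟩ := hmV
  have hJm' : J < m := by omega
  have hKm : 0 < K m - K J := by
    have := hKmono J m hJm' hmN
    linarith
  set s' := (A m - A J) / (K m - K J) with hs'_def
  have hs'mul : s' * (K m - K J) = A m - A J := by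
    rw [hs'_def]
    field_simp
  have hs'D : s' ≤ D := by
    rw [hs'_def, div_le_iff₀ hKm]
    nlinarith
  have hss' : s ≤ s' := by
    have h := hbelow' m (by omega) hmN
    nlinarith
  have hlinem : ∀ x : ℝ, line K A J m x = s' * (x - K J) + A J := by
    intro x
    unfold line
    rw [hs'_def]
  have hmemL : memL N K A D J m := by
    refine ⟨hJm', hmN, ?_, ?_, ?_⟩
    · rw [hlinem]
      nlinarith
    · intro q h1 h2
      rw [hlinem]
      by_cases hq : q ≤ J
      · have hf := hbelow' q h1 h2
        rcases eq_or_lt_of_le hq with rfl | hq'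
        · simp
        · have hKq : K q < K J := hKmono q J hq' hJN
          nlinarith
      · have hKq : 0 < K q - K J := by
          have := hKmono J q (by omega) h2
          linarith
        by_cases hqV : q ∈ V
        · have hq' := hmin q hqV
          have hqmul : (A q - A J) / (K q - K J) * (K q - K J) = A q - A J := by
            field_simp
          nlinarith
        · have : ¬ A q < D * (K q - K J) + A J := by
            intro hcontra
            exact hqV (by
              simp only [hV, Finset.mem_filter, Finset.mem_Icc]
              exact ⟨⟨by omega, h2⟩, hcontra⟩)
          push_neg at this
          nlinarith
    · exact hs'D
  have := hJmax m ⟨J, hJm', hmemL⟩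
  omega
end

section
/- With the setup of the set L of admissible lines (negative intercept, below all asks, slope ≤ D) over strikes 0 < K_1 < ... < K_N: if f_{i,j} ∈ L with 0 < i < j < J^L (where J^L is the maximal right index used in L), then there exists k with j < k ≤ J^L such that f_{j,k} ∈ L. -/
/-- Lemma 3.4: if `f_{i,j} ∈ L` with `0 < i < j < J^L`, then there is
`k` with `j < k ≤ J^L` such that `f_{j,k} ∈ L`. -/
theorem stmt_11 (N : ℕ) (K A : ℕ → ℝ) (D : ℝ) (hD : 0 < D)
    (hK0 : K 0 = 0) (hA0 : A 0 = 0)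
    (hKmono : ∀ m n : ℕ, m < n → n ≤ N → K m < K n)
    (J : ℕ) (hJmem : ∃ i : ℕ, i < J ∧ memL N K A D i J)
    (hJmax : ∀ j : ℕ, (∃ i : ℕ, i < j ∧ memL N K A D i j) → j ≤ J)
    (i j : ℕ) (hi : 0 < i) (hij : i < j) (hjJ : j < J)
    (hmem : memL N K A D i j) :
    ∃ k : ℕ, j < k ∧ k ≤ J ∧ memL N K A D j k := by
  obtain ⟨m, hmJ, hmJ', hJN, hg0, hgasks, hgslope⟩ := hJmem
  obtain ⟨hij', hjN, hf0, hfasks, hfslope⟩ := hmem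
  set sf := (A j - A i) / (K j - K i) with hsf
  set sg := (A J - A m) / (K J - K m) with hsg
  have hKiKj : K i < K j := hKmono i j hij hjN
  have hKmKJ : K m < K J := hKmono m J hmJ hJN
  have hKj : 0 < K j := by
    have := hKmono 0 j (lt_trans hi hij) hjN; rwa [hK0] at this
  have hfKj : sf * (K j - K i) = A j - A i :=
    div_mul_cancel₀ _ (ne_of_gt (sub_pos.mpr hKiKj))
  have hgKJ : sg * (K J - K m) = A J - A m :=
    div_mul_cancel₀ _ (ne_of_gt (sub_pos.mpr hKmKJ))
  set s : ℕ → ℝ := fun n => (A n - A j) / (K n - K j) with hs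
  -- sf ≤ s n for j < n ≤ N
  have hsf_le : ∀ n : ℕ, j < n → n ≤ N → sf ≤ s n := by
    intro n hjn hnN
    have hpos : 0 < K n - K j := sub_pos.mpr (hKmono j n hjn hnN)
    have h1 : sf * (K n - K i) + A i ≤ A n := by
      have := hfasks n (by omega) hnN
      simpa [line, hsf] using this
    rw [hs]
    rw [le_div_iff₀ hpos]
    nlinarith [hfKj]
  -- s J ≤ D
  have hsJ_le : s J ≤ D := by
    have hposJ : 0 < K J - K j := sub_pos.mpr (hKmono j J hjJ hJN)
    have h1 : sg * (K j - K m) + A m ≤ A j := by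
      have := hgasks j (by omega) hjN
      simpa [line, hsg] using this
    have h2 : s J ≤ sg := by
      rw [hs, div_le_iff₀ hposJ]
      nlinarith [hgKJ]
    linarith [hgslope]
  -- choose k minimizing s over (j, N]
  have hJmem' : J ∈ Finset.Icc (j + 1) N := Finset.mem_Icc.mpr ⟨hjJ, hJN⟩
  obtain ⟨k, hk, hkmin⟩ := Finset.exists_min_image (Finset.Icc (j + 1) N) s ⟨J, hJmem'⟩
  obtain ⟨hjk, hkN⟩ := Finset.mem_Icc.mp hk
  have hjk' : j < k := hjk
  have hsk_sf : sf ≤ s k := hsf_le k hjk' hkN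
  have hsk_D : s k ≤ D := le_trans (hkmin J hJmem') hsJ_le
  have hKjKk : K j < K k := hKmono j k hjk' hkN
  have hskKk : s k * (K k - K j) = A k - A j :=
    div_mul_cancel₀ _ (ne_of_gt (sub_pos.mpr hKjKk))
  have hmemjk : memL N K A D j k := by
    refine ⟨hjk', hkN, ?_, ?_, ?_⟩
    · -- negative intercept
      have hf0' : sf * (0 - K i) + A i < 0 := by simpa [line, hsf] using hf0
      show s k * (0 - K j) + A j < 0
      nlinarith [hfKj]
    · intro n hn1 hnN
      show s k * (K n - K j) + A j ≤ A n
      rcases le_or_gt n j with hnj | hnj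
      · -- left of K j
        have hKnKj : K n ≤ K j := by
          rcases lt_or_eq_of_le hnj with h | h
          · exact le_of_lt (hKmono n j h hjN)
          · rw [h]
        have hfn : sf * (K n - K i) + A i ≤ A n := by
          have := hfasks n hn1 hnN
          simpa [line, hsf] using this
        have := mul_le_mul_of_nonpos_right hsk_sf (sub_nonpos.mpr hKnKj)
        nlinarith [hfKj]
      · -- right of K j
        have hpos : 0 < K n - K j := sub_pos.mpr (hKmono j n hnj hnN)
        have hmin : s k ≤ s n := hkmin n (Finset.mem_Icc.mpr ⟨hnj, hnN⟩)
        have hsn : s n * (K n - K j) = A n - A j :=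
          div_mul_cancel₀ _ (ne_of_gt hpos)
        have := mul_le_mul_of_nonneg_right hmin (le_of_lt hpos)
        linarith
    · exact hsk_D
  exact ⟨k, hjk', hJmax k ⟨j, hjk', hmemjk⟩, hmemjk⟩
end

section
/- Suppose the put market (K_n, A_n, B_n)_{1≤n≤N} with bond price D is arbitrage-free, and define f^D = min_i [D(K − K_i) + A_i] (index J achieving the min as an affine function) and g^D = max_i [D(K − K_i) + B_i] (index I achieving the max). If f^D(K) < g^D(K) for some K (equivalently as affine functions f^D < g^D), then I < J. -/
/-- Lemma 3.9: if the market is arbitrage-free and (as affine functions of the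
same slope `D`) `f^D = f^D_J < g^D = g^D_I`, then `I < J`. -/
theorem stmt_12 (N : ℕ) (K A B : ℕ → ℝ) (D : ℝ) (hD : 0 < D)
    (hKpos : 0 < K 1)
    (hKmono : ∀ m n : ℕ, m < n → n ≤ N → K m < K n)
    (hBA : ∀ n : ℕ, 1 ≤ n → n ≤ N → B n ≤ A n)
    (hAF : PutArbitrageFree N K A B D)
    (I J : ℕ) (hI : 1 ≤ I) (hIN : I ≤ N) (hJ : 1 ≤ J) (hJN : J ≤ N)
    (hJmin : ∀ i : ℕ, 1 ≤ i → i ≤ N → A J - D * K J ≤ A i - D * K i)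
    (hImax : ∀ i : ℕ, 1 ≤ i → i ≤ N → B i - D * K i ≤ B I - D * K I)
    (hlt : A J - D * K J < B I - D * K I) :
    I < J := by
  by_contra hIJ
  push_neg at hIJ
  rcases eq_or_lt_of_le hIJ with hEq | hJI
  · rw [hEq] at hlt
    have := hBA I hI hIN
    linarith
  · -- J < I : build an arbitrage
    have hNE : J ≠ I := hJI.ne
    have hKJI : K J < K I := hKmono J I hJI hIN
    set β : ℝ := K I - K J with hβ
    have hβpos : 0 < β := by simp [hβ]; linarith
    set π : ℕ → ℝ := fun n => if n = J then 1 else if n = I then -1 else 0 with hπ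
    have hJmem : J ∈ Finset.Icc 1 N := Finset.mem_Icc.mpr ⟨hJ, hJN⟩
    have hImem : I ∈ Finset.Icc 1 N := Finset.mem_Icc.mpr ⟨hI, hIN⟩
    have hcost : putCost N A B D β π = D * (K I - K J) + A J - B I := by
      unfold putCost
      have h1 : max β 0 = β := max_eq_left hβpos.le
      have h2 : max (-β) 0 = 0 := max_eq_right (by linarith)
      have hterm : ∀ n, max (π n) 0 * A n - max (-π n) 0 * B n
          = (if n = J then A n else 0) - (if n = I then B n else 0) := by
        intro n
        by_cases hn : n = J
        · simp [hπ, hn, hNE]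
        · by_cases hn' : n = I
          · simp [hπ, hn, hn', Ne.symm hNE]
          · simp [hπ, hn, hn', Ne.symm hNE]
      rw [h1, h2]
      simp only [hterm, Finset.sum_sub_distrib, Finset.sum_ite_eq', hJmem, hImem, if_pos]
      ring
    have hcostneg : putCost N A B D β π < 0 := by rw [hcost]; linarith
    have hval : ∀ ω : ℝ, putValue N K β π ω
        = β + max (K J - ω) 0 - max (K I - ω) 0 := by
      intro ω
      unfold putValue
      have hterm : ∀ n, π n * max (K n - ω) 0
          = (if n = J then max (K n - ω) 0 else 0) - (if n = I then max (K n - ω) 0 else 0) := by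
        intro n
        by_cases hn : n = J
        · simp [hπ, hn, hNE]
        · by_cases hn' : n = I
          · simp [hπ, hn, hn', Ne.symm hNE]
          · simp [hπ, hn, hn', Ne.symm hNE]
      simp only [hterm, Finset.sum_sub_distrib, Finset.sum_ite_eq', hJmem, hImem, if_pos]
      ring
    have hvalnn : ∀ ω : ℝ, 0 ≤ putValue N K β π ω := by
      intro ω
      rw [hval ω]
      have : max (K I - ω) 0 ≤ β + max (K J - ω) 0 := by
        apply max_le
        · have := le_max_left (K J - ω) 0
          simp only [hβ]; linarith
        · have := le_max_right (K J - ω) 0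
          linarith
      linarith
    have hpos : ∀ ω : ℝ, 0 < putValue N K β π ω - putCost N A B D β π / D := by
      intro ω
      have hdiv : putCost N A B D β π / D < 0 := div_neg_of_neg_of_pos hcostneg hD
      have := hvalnn ω
      linarith
    exact hAF ⟨β, π, fun ω _ => (hpos ω).le, 0, le_refl 0, hpos 0⟩
end

section
/- Assume the put market (K_n, A_n, B_n)_{1≤n≤N} with bond price D is arbitrage-free, and the admissible line set L is empty. If additionally g^D ≤ f^D (where g^D(K) = max_i [D(K−K_i)+B_i] and f^D(K) = min_i [D(K−K_i)+A_i]), then the function p̃(K) = max{g^D(K), 0} is a non-decreasing convex function with p̃ = 0 on a neighborhood of 0, Lipschitz with constant D, and satisfying B_n ≤ p̃(K_n) ≤ A_n for all n. -/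
lemma single_cost (N : ℕ) (A B : ℕ → ℝ) (D c : ℝ) (n : ℕ) (hn : n ∈ Finset.Icc 1 N) :
    putCost N A B D 0 (fun m => if m = n then c else 0)
      = max c 0 * A n - max (-c) 0 * B n := by
  unfold putCost
  rw [Finset.sum_eq_single_of_mem n hn]
  · simp
  · intro m _ hm
    simp [hm]

lemma single_value (N : ℕ) (K : ℕ → ℝ) (c ω : ℝ) (n : ℕ) (hn : n ∈ Finset.Icc 1 N) :
    putValue N K 0 (fun m => if m = n then c else 0) ω = c * max (K n - ω) 0 := by
  unfold putValue
  rw [Finset.sum_eq_single_of_mem n hn]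
  · simp
  · intro m _ hm
    simp [hm]

/-- Theorem 3.10, first case: if the market is arbitrage-free, `L = ∅` and
`g^D ≤ f^D`, then `p̃ = max{g^D, 0}` is a non-decreasing convex function,
vanishing on a neighborhood of `0`, Lipschitz with constant `D`, and lying
within the bid–ask spreads. -/
theorem stmt_13 (N : ℕ) (K A B : ℕ → ℝ) (D : ℝ) (hD : 0 < D)
    (hN : 1 ≤ N) (hne : (Finset.Icc 1 N).Nonempty)
    (hKpos : 0 < K 1)
    (hKmono : ∀ m n : ℕ, m < n → n ≤ N → K m < K n)
    (hBA : ∀ n : ℕ, 1 ≤ n → n ≤ N → B n ≤ A n)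
    (hAF : PutArbitrageFree N K A B D)
    (hLempty : ∀ i j : ℕ, ¬ memL N K A D i j)
    (hgf : ∀ x : ℝ,
      (Finset.Icc 1 N).sup' hne (fun i => D * (x - K i) + B i) ≤
        (Finset.Icc 1 N).inf' hne (fun i => D * (x - K i) + A i))
    (pt : ℝ → ℝ)
    (hpt : ∀ x : ℝ,
      pt x = max ((Finset.Icc 1 N).sup' hne (fun i => D * (x - K i) + B i)) 0) :
    Monotone pt ∧ ConvexOn ℝ Set.univ pt ∧
      (∃ ε : ℝ, 0 < ε ∧ ∀ x ∈ Set.Icc (0 : ℝ) ε, pt x = 0) ∧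
      (∀ x y : ℝ, x < y → pt y - pt x ≤ D * (y - x)) ∧
      (∀ n : ℕ, 1 ≤ n → n ≤ N → B n ≤ pt (K n) ∧ pt (K n) ≤ A n) := by
  -- positivity of strikes
  have hKp : ∀ n : ℕ, 1 ≤ n → n ≤ N → 0 < K n := by
    intro n h1 h2
    rcases eq_or_lt_of_le h1 with h | h
    · rwa [← h]
    · exact lt_trans hKpos (hKmono 1 n h h2)
  -- bids are strictly below discounted strikes
  have hBDK : ∀ n : ℕ, 1 ≤ n → n ≤ N → B n < D * K n := by
    intro n h1 h2
    by_contra hc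
    push_neg at hc
    have hn : n ∈ Finset.Icc 1 N := Finset.mem_Icc.mpr ⟨h1, h2⟩
    apply hAF
    refine ⟨0, fun m => if m = n then (-1 : ℝ) else 0, ?_, ?_⟩
    · intro ω hω
      rw [single_value N K (-1) ω n hn, single_cost N A B D (-1) n hn]
      have h0 : max (-1 : ℝ) 0 = 0 := by norm_num
      have h1' : max (-(-1) : ℝ) 0 = 1 := by norm_num
      rw [h0, h1']
      have hm : max (K n - ω) 0 ≤ K n := by
        apply max_le (by linarith) (le_of_lt (hKp n h1 h2))
      have hK : K n ≤ B n / D := (le_div_iff₀ hD).mpr (by nlinarith)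
      have heq : (0 * A n - 1 * B n) / D = -(B n / D) := by ring
      rw [heq]
      linarith
    · refine ⟨K n, (hKp n h1 h2).le, ?_⟩
      rw [single_value N K (-1) (K n) n hn, single_cost N A B D (-1) n hn]
      have h0 : max (-1 : ℝ) 0 = 0 := by norm_num
      have h1' : max (-(-1) : ℝ) 0 = 1 := by norm_num
      rw [h0, h1']
      have : max (K n - K n) 0 = 0 := by simp
      rw [this]
      have hBpos : 0 < B n := lt_of_lt_of_le (mul_pos hD (hKp n h1 h2)) hc
      have : 0 < B n / D := div_pos hBpos hD
      ring_nf
      ring_nf at this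
      linarith
  -- asks are nonnegative
  have hApos : ∀ n : ℕ, 1 ≤ n → n ≤ N → 0 ≤ A n := by
    intro n h1 h2
    by_contra hc
    push_neg at hc
    have hn : n ∈ Finset.Icc 1 N := Finset.mem_Icc.mpr ⟨h1, h2⟩
    apply hAF
    refine ⟨0, fun m => if m = n then (1 : ℝ) else 0, ?_, ?_⟩
    · intro ω hω
      rw [single_value N K 1 ω n hn, single_cost N A B D 1 n hn]
      have h0 : max (-(1:ℝ)) 0 = 0 := by norm_num
      have h1' : max (1:ℝ) 0 = 1 := by norm_num
      rw [h0, h1']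
      have hm : 0 ≤ max (K n - ω) 0 := le_max_right _ _
      have : (1 * A n - 0 * B n) / D < 0 := by
        apply div_neg_of_neg_of_pos _ hD
        linarith
      linarith
    · refine ⟨0, le_refl 0, ?_⟩
      rw [single_value N K 1 0 n hn, single_cost N A B D 1 n hn]
      have h0 : max (-(1:ℝ)) 0 = 0 := by norm_num
      have h1' : max (1:ℝ) 0 = 1 := by norm_num
      rw [h0, h1']
      have hm : 0 ≤ max (K n - 0) 0 := le_max_right _ _
      have : (1 * A n - 0 * B n) / D < 0 := by
        apply div_neg_of_neg_of_pos _ hD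
        linarith
      linarith
  -- pt is nonnegative
  have hpt0 : ∀ x : ℝ, 0 ≤ pt x := by
    intro x; rw [hpt]; exact le_max_right _ _
  -- each affine bid line lies below pt
  have hle : ∀ x : ℝ, ∀ i ∈ Finset.Icc 1 N, D * (x - K i) + B i ≤ pt x := by
    intro x i hi
    rw [hpt]
    exact le_trans (Finset.le_sup' (fun i => D * (x - K i) + B i) hi) (le_max_left _ _)
  constructor
  · -- Monotone
    intro x y hxy
    rw [hpt x, hpt y]
    apply max_le_max _ le_rfl
    apply Finset.sup'_le
    intro i hi
    refine le_trans ?_ (Finset.le_sup' (fun i => D * (y - K i) + B i) hi)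
    nlinarith
  constructor
  · -- Convex
    refine ⟨convex_univ, ?_⟩
    intro x _ y _ a b ha hb hab
    simp only [smul_eq_mul]
    rw [hpt (a * x + b * y)]
    apply max_le
    · apply Finset.sup'_le
      intro i hi
      have h1 := hle x i hi
      have h2 := hle y i hi
      have hid : D * (a * x + b * y - K i) + B i
          = a * (D * (x - K i) + B i) + b * (D * (y - K i) + B i) := by
        have hb1 : b = 1 - a := by linarith
        rw [hb1]; ring
      rw [hid]
      exact add_le_add (mul_le_mul_of_nonneg_left h1 ha) (mul_le_mul_of_nonneg_left h2 hb)
    · have := mul_nonneg ha (hpt0 x)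
      have := mul_nonneg hb (hpt0 y)
      linarith
  constructor
  · -- vanishes near 0
    refine ⟨(Finset.Icc 1 N).inf' hne (fun i => K i - B i / D), ?_, ?_⟩
    · rw [Finset.lt_inf'_iff]
      intro i hi
      obtain ⟨h1, h2⟩ := Finset.mem_Icc.mp hi
      have := hBDK i h1 h2
      have : B i / D < K i := by rw [div_lt_iff₀ hD]; nlinarith
      linarith
    · intro x hx
      obtain ⟨hx0, hxe⟩ := hx
      rw [hpt]
      apply max_eq_right
      apply Finset.sup'_le
      intro i hi
      have hei : (Finset.Icc 1 N).inf' hne (fun i => K i - B i / D) ≤ K i - B i / D :=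
        Finset.inf'_le _ hi
      have : x ≤ K i - B i / D := le_trans hxe hei
      have : D * x ≤ D * K i - B i := by
        rw [le_sub_iff_add_le] at this ⊢
        calc D * x + B i ≤ D * (K i - B i / D) + B i := by nlinarith
          _ = D * K i := by field_simp; ring
      linarith
  constructor
  · -- Lipschitz
    intro x y hxy
    rw [hpt x, hpt y]
    apply sub_le_iff_le_add.mpr
    apply max_le
    · apply Finset.sup'_le
      intro i hi
      have := Finset.le_sup' (fun i => D * (x - K i) + B i) hi
      have hmx : D * (x - K i) + B i ≤ max ((Finset.Icc 1 N).sup' hne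
          (fun i => D * (x - K i) + B i)) 0 := le_trans this (le_max_left _ _)
      nlinarith
    · have : 0 ≤ max ((Finset.Icc 1 N).sup' hne (fun i => D * (x - K i) + B i)) 0 :=
        le_max_right _ _
      nlinarith
  · -- bid-ask bounds
    intro n h1 h2
    have hn : n ∈ Finset.Icc 1 N := Finset.mem_Icc.mpr ⟨h1, h2⟩
    constructor
    · have := hle (K n) n hn
      simpa using this
    · rw [hpt]
      apply max_le _ (hApos n h1 h2)
      refine le_trans (hgf (K n)) ?_
      refine le_trans (Finset.inf'_le _ hn) ?_
      simp
end

section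
/- Let f_{i,j} be a line through ask points with the property that there exists m < i with f_{i,j}(K_m) < B_m and f_{i,j}(K_n) ≤ A_n for all n, and suppose slope(f_{i,j}) ≤ D. If the system (K_n, A_n, B_n) is arbitrage-free, then f_{i,j}(0) < 0; hence the class M (lines undercutting some bid to the left, below all asks, slope ≤ D) is contained in the class L (lines with negative intercept, below all asks, slope ≤ D). -/
lemma key_arb (N : ℕ) (K A B : ℕ → ℝ) (D : ℝ) (hD : 0 < D)
    (hAF : PutArbitrageFree N K A B D)
    (m i : ℕ) (hm1 : 1 ≤ m) (hmi : m < i) (hiN : i ≤ N)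
    (hKm : 0 < K m) (hKmi : K m < K i) :
    K i * B m < K m * A i := by
  by_contra h
  push_neg at h
  have hKi : 0 < K i := hKm.trans hKmi
  set lam : ℝ := K m / K i with hlam
  have hlampos : 0 < lam := div_pos hKm hKi
  have hlamlt : lam < 1 := (div_lt_one hKi).2 hKmi
  have hlamKi : lam * K i = K m := div_mul_cancel₀ _ (ne_of_gt hKi)
  set π : ℕ → ℝ := fun n => if n = m then -1 else if n = i then lam else 0 with hπ
  have hne : m ≠ i := Nat.ne_of_lt hmi
  have hsub : ({m, i} : Finset ℕ) ⊆ Finset.Icc 1 N := by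
    intro x hx
    simp only [Finset.mem_insert, Finset.mem_singleton] at hx
    rcases hx with rfl | rfl
    · exact Finset.mem_Icc.2 ⟨hm1, le_of_lt (lt_of_lt_of_le hmi hiN)⟩
    · exact Finset.mem_Icc.2 ⟨le_trans hm1 (le_of_lt hmi), hiN⟩
  have hπm : π m = -1 := by simp [hπ]
  have hπi : π i = lam := by simp [hπ, hne.symm]
  have hcost : putCost N A B D 0 π = lam * A i - B m := by
    unfold putCost
    rw [← Finset.sum_subset hsub (by
      intro x hx hxn
      simp only [Finset.mem_insert, Finset.mem_singleton, not_or] at hxn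
      have : π x = 0 := by simp [hπ, hxn.1, hxn.2]
      simp [this])]
    rw [Finset.sum_pair hne, hπm, hπi]
    have h1 : max (-1 : ℝ) 0 = 0 := by norm_num
    have h2 : max (-(-1) : ℝ) 0 = 1 := by norm_num
    have h3 : max lam 0 = lam := max_eq_left hlampos.le
    have h4 : max (-lam) 0 = 0 := max_eq_right (by linarith)
    rw [h1, h2, h3, h4]
    ring
  have hval : ∀ ω : ℝ, putValue N K 0 π ω
      = lam * max (K i - ω) 0 - max (K m - ω) 0 := by
    intro ω
    unfold putValue
    rw [← Finset.sum_subset hsub (by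
      intro x hx hxn
      simp only [Finset.mem_insert, Finset.mem_singleton, not_or] at hxn
      have : π x = 0 := by simp [hπ, hxn.1, hxn.2]
      simp [this])]
    rw [Finset.sum_pair hne, hπm, hπi]
    ring
  have hcostle : putCost N A B D 0 π ≤ 0 := by
    rw [hcost]
    have : lam * A i ≤ B m := by
      rw [hlam, div_mul_eq_mul_div, div_le_iff₀ hKi]
      nlinarith
    linarith
  have hCD : putCost N A B D 0 π / D ≤ 0 := div_nonpos_of_nonpos_of_nonneg hcostle hD.le
  apply hAF
  refine ⟨0, π, ?_, ⟨K m, hKm.le, ?_⟩⟩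
  · intro ω hω
    have hV : 0 ≤ putValue N K 0 π ω := by
      rw [hval]
      rcases le_or_gt ω (K m) with hc | hc
      · rw [max_eq_left (by linarith), max_eq_left (by linarith)]
        nlinarith
      · rw [max_eq_right (by linarith : K m - ω ≤ 0)]
        have := mul_nonneg hlampos.le (le_max_right (K i - ω) (0:ℝ))
        linarith
    linarith
  · have hV : 0 < putValue N K 0 π (K m) := by
      rw [hval]
      rw [max_eq_left (by linarith), max_eq_right (by linarith)]
      nlinarith
    linarith

/-- In an arbitrage-free market, any line `f_{i,j}` through two ask points that
undercuts some bid to the left of `i`, lies weakly below all asks and has slope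
at most `D`, must have negative intercept; hence `M ⊆ L`. -/
theorem stmt_16 (N : ℕ) (K A B : ℕ → ℝ) (D : ℝ) (hD : 0 < D)
    (hKpos : 0 < K 1)
    (hKmono : ∀ m n : ℕ, m < n → n ≤ N → K m < K n)
    (hBA : ∀ n : ℕ, 1 ≤ n → n ≤ N → B n ≤ A n)
    (hAF : PutArbitrageFree N K A B D)
    (i j : ℕ) (hij : i < j) (hjN : j ≤ N)
    (hm : ∃ m : ℕ, 1 ≤ m ∧ m < i ∧ line K A i j (K m) < B m)
    (hasks : ∀ n : ℕ, 1 ≤ n → n ≤ N → line K A i j (K n) ≤ A n)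
    (hslope : (A j - A i) / (K j - K i) ≤ D) :
    line K A i j 0 < 0 := by
  obtain ⟨m, hm1, hmi, hlt⟩ := hm
  have hmN : m ≤ N := le_of_lt (lt_of_lt_of_le (hmi.trans hij) hjN)
  have hiN : i ≤ N := le_of_lt (lt_of_lt_of_le hij hjN)
  have hKm : 0 < K m := by
    rcases eq_or_lt_of_le hm1 with h | h
    · rwa [← h]
    · exact hKpos.trans (hKmono 1 m h hmN)
  have hKmi : K m < K i := hKmono m i hmi hiN
  have hKi : 0 < K i := hKm.trans hKmi
  have hkey : K i * B m < K m * A i :=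
    key_arb N K A B D hD hAF m i hm1 hmi hiN hKm hKmi
  unfold line at hlt ⊢
  set s : ℝ := (A j - A i) / (K j - K i) with hs
  have h1 : K i * (s * (K m - K i) + A i) < K i * B m :=
    mul_lt_mul_of_pos_left hlt hKi
  nlinarith [mul_pos (sub_pos.2 hKmi) hKi]
end

section
/- Consider call-option data: strikes 0 < K_1 < ... < K_N with asks A_n, bids B_n, bond price D, and suppose the call market is arbitrage-free. Then for any 0 < i < j < k ≤ N, the line f_{i,k} through (K_i, A_i) and (K_k, A_k) satisfies f_{i,k}(K_j) > B_j. -/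
/-- Initial cost of a static portfolio of `β` zero-coupon bonds (price `D`) and
`π n` call options (asks for longs, bids for shorts). -/
noncomputable def callCost (N : ℕ) (A B : ℕ → ℝ) (D β : ℝ) (π : ℕ → ℝ) : ℝ :=
  (max β 0 * D - max (-β) 0 * D) +
    ∑ n ∈ Finset.Icc 1 N, (max (π n) 0 * A n - max (-π n) 0 * B n)

/-- Terminal payoff of the call portfolio in state `ω`. -/
noncomputable def callValue (N : ℕ) (K : ℕ → ℝ) (β : ℝ) (π : ℕ → ℝ) (ω : ℝ) : ℝ :=
  β + ∑ n ∈ Finset.Icc 1 N, π n * max (ω - K n) 0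

/-- The call-option market `(K n, A n, B n)_{1 ≤ n ≤ N}` is arbitrage-free. -/
def CallArbitrageFree (N : ℕ) (K A B : ℕ → ℝ) (D : ℝ) : Prop :=
  ¬ ∃ (β : ℝ) (π : ℕ → ℝ),
      (∀ ω : ℝ, 0 ≤ ω → 0 ≤ callValue N K β π ω - callCost N A B D β π / D) ∧
      (∃ ω : ℝ, 0 ≤ ω ∧ 0 < callValue N K β π ω - callCost N A B D β π / D)

/-!
Put weight `λ = (K k - K j) / (K k - K i)` on the call struck at `K i`, `1 - λ` on the one
struck at `K k`, and sell the call struck at `K j`. Since `K j = λ K i + (1 - λ) K k` and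
`x ↦ x⁺` is convex, this butterfly pays off nonnegatively in every state and strictly positively
at `ω = K j`, while it costs `λ A i + (1 - λ) A k - B j = line K A i k (K j) - B j`.
Absence of arbitrage forces this cost to be positive.
-/

open Finset

theorem Finset.sum_eq_add_add_of_eq_zero {α M : Type*} [DecidableEq α] [AddCommMonoid M]
    {s : Finset α} {g : α → M} {i j k : α} (hi : i ∈ s) (hj : j ∈ s) (hk : k ∈ s)
    (hij : i ≠ j) (hik : i ≠ k) (hjk : j ≠ k)
    (hg : ∀ n ∈ s, n ≠ i → n ≠ j → n ≠ k → g n = 0) :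
    ∑ n ∈ s, g n = g i + g j + g k := by
  have hsub : {i, j, k} ⊆ s := by
    simp only [insert_subset_iff, singleton_subset_iff]
    exact ⟨hi, hj, hk⟩
  rw [← sum_subset hsub fun n hn hn' => by
    simp only [mem_insert, mem_singleton, not_or] at hn'
    exact hg n hn hn'.1 hn'.2.1 hn'.2.2]
  rw [sum_insert (by simp [hij, hik]), sum_insert (by simp [hjk]), sum_singleton, add_assoc]

theorem max_sub_convex_comb_le {a c l ω : ℝ} (hl0 : 0 ≤ l) (hl1 : l ≤ 1) :
    max (ω - (l * a + (1 - l) * c)) 0 ≤ l * max (ω - a) 0 + (1 - l) * max (ω - c) 0 := by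
  have ha := le_max_left (ω - a) 0
  have hc := le_max_left (ω - c) 0
  have ha' := le_max_right (ω - a) 0
  have hc' := le_max_right (ω - c) 0
  exact max_le (by nlinarith) (by nlinarith)

def butterfly (i j k : ℕ) (l : ℝ) (n : ℕ) : ℝ :=
  if n = i then l else if n = j then -1 else if n = k then 1 - l else 0

section Butterfly

variable {N i j k : ℕ} (hi : 0 < i) (hij : i < j) (hjk : j < k) (hkN : k ≤ N)
include hi hij hjk hkN

theorem sum_Icc_butterfly (l : ℝ) (g : ℕ → ℝ → ℝ) (hg : ∀ n, g n 0 = 0) :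
    ∑ n ∈ Icc 1 N, g n (butterfly i j k l n) = g i l + g j (-1) + g k (1 - l) := by
  have hik : i ≠ k := (hij.trans hjk).ne
  rw [sum_eq_add_add_of_eq_zero (by simp; omega) (by simp; omega) (by simp; omega)
    hij.ne hik hjk.ne fun n _ hni hnj hnk => by simp [butterfly, hni, hnj, hnk, hg]]
  simp [butterfly, hij.ne', hik.symm, hjk.ne']

theorem callValue_butterfly (K : ℕ → ℝ) (l ω : ℝ) :
    callValue N K 0 (butterfly i j k l) ω =
      l * max (ω - K i) 0 - max (ω - K j) 0 + (1 - l) * max (ω - K k) 0 := by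
  rw [callValue, sum_Icc_butterfly hi hij hjk hkN l (fun n p => p * max (ω - K n) 0)
    fun _ => zero_mul _]
  ring

theorem callCost_butterfly (A B : ℕ → ℝ) (D : ℝ) {l : ℝ} (hl0 : 0 ≤ l) (hl1 : l ≤ 1) :
    callCost N A B D 0 (butterfly i j k l) = l * A i + (1 - l) * A k - B j := by
  rw [callCost, sum_Icc_butterfly hi hij hjk hkN l
    (fun n p => max p 0 * A n - max (-p) 0 * B n) fun _ => by simp]
  simp only [max_eq_left hl0, max_eq_right (neg_nonpos.mpr hl0), max_eq_left (sub_nonneg.mpr hl1),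
    max_eq_right (neg_nonpos.mpr (sub_nonneg.mpr hl1))]
  norm_num
  ring

end Butterfly

theorem line_eq_convex_comb (K A : ℕ → ℝ) {i k : ℕ} (hik : K i ≠ K k) (x : ℝ) :
    line K A i k x =
      (K k - x) / (K k - K i) * A i + (1 - (K k - x) / (K k - K i)) * A k := by
  have : K k - K i ≠ 0 := sub_ne_zero.mpr hik.symm
  rw [line]
  field_simp
  ring

theorem CallArbitrageFree.callCost_pos {N : ℕ} {K A B : ℕ → ℝ} {D : ℝ}
    (hAF : CallArbitrageFree N K A B D) (hD : 0 < D) {π : ℕ → ℝ}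
    (hnonneg : ∀ ω, 0 ≤ ω → 0 ≤ callValue N K 0 π ω)
    (hpos : ∃ ω, 0 ≤ ω ∧ 0 < callValue N K 0 π ω) :
    0 < callCost N A B D 0 π := by
  by_contra! hcost
  have hcost' : callCost N A B D 0 π / D ≤ 0 := div_nonpos_of_nonpos_of_nonneg hcost hD.le
  obtain ⟨ω₀, hω₀, hpos⟩ := hpos
  exact hAF ⟨0, π, fun ω hω => by linarith [hnonneg ω hω], ω₀, hω₀, by linarith⟩

theorem stmt_17_general (N : ℕ) (K A B : ℕ → ℝ) (D : ℝ) (hD : 0 < D)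
    (hKpos : 0 < K 1)
    (hKmono : ∀ m n : ℕ, m < n → n ≤ N → K m < K n)
    (hAF : CallArbitrageFree N K A B D)
    (i j k : ℕ) (hi : 0 < i) (hij : i < j) (hjk : j < k) (hkN : k ≤ N) :
    B j < line K A i k (K j) := by
  have hab : K i < K j := hKmono i j hij (by omega)
  have hbc : K j < K k := hKmono j k hjk hkN
  set l := (K k - K j) / (K k - K i) with hl
  have hca : 0 < K k - K i := by linarith
  have hl0 : 0 < l := div_pos (by linarith) hca
  have hl1 : l < 1 := (div_lt_one hca).mpr (by linarith)
  have hKj : K j = l * K i + (1 - l) * K k := by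
    rw [hl]
    field_simp
    ring
  have hnonneg (ω : ℝ) (_ : 0 ≤ ω) : 0 ≤ callValue N K 0 (butterfly i j k l) ω := by
    rw [callValue_butterfly hi hij hjk hkN, hKj]
    linarith [max_sub_convex_comb_le (a := K i) (c := K k) (ω := ω) hl0.le hl1.le]
  have hpos : 0 < callValue N K 0 (butterfly i j k l) (K j) := by
    rw [callValue_butterfly hi hij hjk hkN, max_eq_left (by linarith : 0 ≤ K j - K i),
      sub_self, max_self, max_eq_right (by linarith : K j - K k ≤ 0)]
    linarith [mul_pos hl0 (sub_pos.mpr hab)]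
  have hKj0 : 0 ≤ K j := (hKpos.trans (hKmono 1 j (by omega) (by omega))).le
  have hcost := hAF.callCost_pos hD hnonneg ⟨K j, hKj0, hpos⟩
  rw [callCost_butterfly hi hij hjk hkN A B D hl0.le hl1.le] at hcost
  rw [line_eq_convex_comb K A (hab.trans hbc).ne (K j)]
  linarith

/-- Butterfly lemma for calls: in an arbitrage-free call market, for
`0 < i < j < k ≤ N` the line through `(K i, A i)` and `(K k, A k)` lies strictly
above the bid at `K j`. -/
theorem stmt_17 (N : ℕ) (K A B : ℕ → ℝ) (D : ℝ) (hD : 0 < D)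
    (hKpos : 0 < K 1)
    (hKmono : ∀ m n : ℕ, m < n → n ≤ N → K m < K n)
    (hBA : ∀ n : ℕ, 1 ≤ n → n ≤ N → B n ≤ A n)
    (hAF : CallArbitrageFree N K A B D)
    (i j k : ℕ) (hi : 0 < i) (hij : i < j) (hjk : j < k) (hkN : k ≤ N) :
    B j < line K A i k (K j) :=
  stmt_17_general N K A B D hD hKpos hKmono hAF i j k hi hij hjk hkN
end
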